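/- arXiv:1607.07957 — 3 statements merged into one kernel-verified Lean document; each statement's English description precedes it below -/
import Mathlib

section
/- Let $(E,\mathcal{F})$ be a matroid on a finite ground set $E$ and let all bases (maximal independent sets) of the matroid have common size $M$. Let $k \ge 1$, let $f : (k+1)^E \to \mathbb{R}$ be a monotone $k$-submodular function with $f(\mathbf{0}) = 0$, and consider the problem of maximizing $f(\mathbf{x})$ over $\mathbf{x} \in (k+1)^E$ subject to $\mathrm{supp}(\mathbf{x}) \in \mathcal{F}$. Suppose $\mathbf{s}^{(0)} = \mathbf{0}, \mathbf{s}^{(1)}, \dots, \mathbf{s}^{(M)}$ is a greedy sequence: for each $j \in \{1,\dots,M\}$ there is a pair $(e^{(j)}, i^{(j)})$ with $e^{(j)} \notin \mathrm{supp}(\mathbf{s}^{(j-1)})$, $\mathrm{supp}(\mathbf{s}^{(j-1)}) \cup \{e^{(j)}\} \in \mathcal{F}$, $\mathbf{s}^{(j)}$ equal to $\mathbf{s}^{(j-1)}$ except that $\mathbf{s}^{(j)}(e^{(j)}) = i^{(j)}$, and the marginal gain $\Delta_{e^{(j)}, i^{(j)}} f(\mathbf{s}^{(j-1)})$ is maximal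 among all pairs $(e,i)$ with $e \notin \mathrm{supp}(\mathbf{s}^{(j-1)})$, $\mathrm{supp}(\mathbf{s}^{(j-1)}) \cup \{e\} \in \mathcal{F}$ and $i \in \{1,\dots,k\}$. Then the output $\mathbf{s} = \mathbf{s}^{(M)}$ is a $1/2$-approximate solution: for every $\mathbf{x} \in (k+1)^E$ with $\mathrm{supp}(\mathbf{x}) \in \mathcal{F}$ one has $2 f(\mathbf{s}) \ge f(\mathbf{x})$. -/
open Finset

section KSubmodularDefs

variable {E : Type*} [Fintype E] [DecidableEq E] {k : ℕ}

/-- The support of a vector `x ∈ (k+1)^E`, i.e. the set of coordinates with nonzero value. -/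
def supp (x : E → Fin (k + 1)) : Finset E :=
  Finset.univ.filter (fun e => x e ≠ 0)

/-- The partial order `x ⪯ y`, i.e. `X i ⊆ Y i` for every `i ∈ {1, …, k}`. -/
def kLe (x y : E → Fin (k + 1)) : Prop :=
  ∀ e, x e ≠ 0 → y e = x e

/-- The strict partial order `x ≺ y`. -/
def kLt (x y : E → Fin (k + 1)) : Prop :=
  kLe x y ∧ x ≠ y

/-- The meet `x ⊓ y`, whose `i`-th component is `X i ∩ Y i`. -/
def kInf (x y : E → Fin (k + 1)) : E → Fin (k + 1) :=
  fun e => if x e = y e then x e else 0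

/-- The join `x ⊔ y`, whose `i`-th component is `(X i ∪ Y i) \ ⋃_{j ≠ i} (X j ∪ Y j)`. -/
def kSup (x y : E → Fin (k + 1)) : E → Fin (k + 1) :=
  fun e =>
    if x e = 0 then y e
    else if y e = 0 then x e
    else if x e = y e then x e else 0

/-- `f : (k+1)^E → ℝ` is `k`-submodular. -/
def KSubmodular (f : (E → Fin (k + 1)) → ℝ) : Prop :=
  ∀ x y, f x + f y ≥ f (kSup x y) + f (kInf x y)

/-- `f : (k+1)^E → ℝ` is monotone w.r.t. the partial order `⪯`. -/
def KMonotone (f : (E → Fin (k + 1)) → ℝ) : Prop :=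
  ∀ x y, kLe x y → f x ≤ f y

/-- The marginal gain `Δ_{e,i} f(x) = f(x with coordinate e set to i) - f(x)`. -/
def marg (f : (E → Fin (k + 1)) → ℝ) (e : E) (i : Fin (k + 1))
    (x : E → Fin (k + 1)) : ℝ :=
  f (Function.update x e i) - f x

/-- Matroid axioms (M1)–(M3) for a family `F` of subsets of `E`. -/
structure IsMatroid (F : Finset E → Prop) : Prop where
  empty : F ∅
  subset : ∀ ⦃A B : Finset E⦄, A ⊆ B → F B → F A
  exchange : ∀ ⦃A B : Finset E⦄, F A → F B → A.card < B.card →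
    ∃ e ∈ B \ A, F (insert e A)

/-- A basis of the matroid: a maximal independent set. -/
def IsBasis (F : Finset E → Prop) (B : Finset E) : Prop :=
  F B ∧ ∀ B', F B' → B ⊆ B' → B' = B

end KSubmodularDefs


section AuxLemmas

variable {E : Type*} [Fintype E] [DecidableEq E] {k : ℕ}

lemma mem_supp' {x : E → Fin (k + 1)} {c : E} : c ∈ supp x ↔ x c ≠ 0 := by
  simp [supp]

lemma supp_update_ne {x : E → Fin (k + 1)} {e : E} {i : Fin (k + 1)} (hi : i ≠ 0) :
    supp (Function.update x e i) = insert e (supp x) := by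
  ext c
  by_cases h : c = e
  · subst h; simp [mem_supp', Function.update_self, hi]
  · simp [mem_supp', Function.update_of_ne h, h]

lemma supp_update_zero {x : E → Fin (k + 1)} {e : E} :
    supp (Function.update x e (0 : Fin (k + 1))) = (supp x).erase e := by
  ext c
  by_cases h : c = e
  · subst h; simp [mem_supp', Function.update_self]
  · simp [mem_supp', Function.update_of_ne h, h]

lemma kLe_update {x : E → Fin (k + 1)} {e : E} (hx : x e = 0) (i : Fin (k + 1)) :
    kLe x (Function.update x e i) := by
  intro c hc
  have hce : c ≠ e := fun h => hc (h ▸ hx)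
  rw [Function.update_of_ne hce]

/-- Orthant submodularity from k-submodularity. -/
lemma orthant {f : (E → Fin (k + 1)) → ℝ} (hsub : KSubmodular f)
    {t y : E → Fin (k + 1)} (ht : kLe t y) {e : E} (hy : y e = 0)
    {i : Fin (k + 1)} (hi : i ≠ 0) :
    f (Function.update y e i) - f y ≤ f (Function.update t e i) - f t := by
  have hte : t e = 0 := by
    by_contra h
    have h2 := ht e h
    rw [hy] at h2
    exact h h2.symm
  have h := hsub (Function.update t e i) y
  have hsup : kSup (Function.update t e i) y = Function.update y e i := by
    funext c
    by_cases hc : c = e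
    · subst hc
      simp [kSup, Function.update_self, hy, hi]
    · simp only [kSup, Function.update_of_ne hc]
      by_cases h0 : t c = 0
      · simp [h0]
      · have hyc := ht c h0
        simp [h0, hyc, Function.update_of_ne hc]
  have hinf : kInf (Function.update t e i) y = t := by
    funext c
    by_cases hc : c = e
    · subst hc
      simp only [kInf, Function.update_self]
      rw [hy, hte, if_neg hi]
    · simp only [kInf, Function.update_of_ne hc]
      by_cases h0 : t c = 0
      · rw [h0]
        split <;> rfl
      · have hyc := ht c h0
        simp [hyc]
  rw [hsup, hinf] at h
  linarith

lemma exists_basis_superset {F : Finset E → Prop} (hF : IsMatroid F) {A : Finset E}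
    (hA : F A) : ∃ B, A ⊆ B ∧ IsBasis F B := by
  classical
  obtain ⟨B, hB, hmax⟩ := Finset.exists_max_image
    (Finset.univ.filter fun B => F B ∧ A ⊆ B) Finset.card ⟨A, by simp [hA]⟩
  simp only [Finset.mem_filter, Finset.mem_univ, true_and] at hB hmax
  refine ⟨B, hB.2, hB.1, fun B' hB' hsub => ?_⟩
  exact (Finset.eq_of_subset_of_card_le hsub
    (hmax B' (by simp [hB', hB.2.trans hsub]))).symm

lemma augment {F : Finset E → Prop} (hF : IsMatroid F) :
    ∀ n (A B : Finset E), F A → F B → A.card ≤ B.card → B.card - A.card ≤ n →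
    ∃ C, F C ∧ A ⊆ C ∧ C ⊆ A ∪ B ∧ C.card = B.card := by
  intro n
  induction n with
  | zero =>
    intro A B hA hB hle hn
    exact ⟨A, hA, subset_rfl, Finset.subset_union_left, by omega⟩
  | succ n ih =>
    intro A B hA hB hle hn
    by_cases h : A.card = B.card
    · exact ⟨A, hA, subset_rfl, Finset.subset_union_left, h⟩
    · have hlt : A.card < B.card := lt_of_le_of_ne hle h
      obtain ⟨x, hx, hFx⟩ := hF.exchange hA hB hlt
      rw [Finset.mem_sdiff] at hx
      have hcard : (insert x A).card = A.card + 1 := Finset.card_insert_of_notMem hx.2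
      obtain ⟨C, hC, hsub, hsub2, hcardC⟩ :=
        ih (insert x A) B hFx hB (by omega) (by omega)
      refine ⟨C, hC, (Finset.subset_insert _ _).trans hsub, hsub2.trans ?_, hcardC⟩
      intro c hc
      rcases Finset.mem_union.1 hc with h1 | h1
      · rcases Finset.mem_insert.1 h1 with rfl | h2
        · exact Finset.mem_union_right _ hx.1
        · exact Finset.mem_union_left _ h2
      · exact Finset.mem_union_right _ h1

lemma exchange_basis {F : Finset E → Prop} (hF : IsMatroid F) {S B : Finset E} {e1 : E}
    (hS : F (insert e1 S)) (hB : F B) (hSB : S ⊆ B) (he1S : e1 ∉ S) (he1B : e1 ∉ B)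
    (hcard : (insert e1 S).card ≤ B.card) :
    ∃ e' ∈ B, e' ∉ S ∧ F (insert e1 (B.erase e')) := by
  obtain ⟨C, hC, hAC, hCAB, hCcard⟩ :=
    augment hF B.card (insert e1 S) B hS hB hcard (by omega)
  have hABeq : insert e1 S ∪ B = insert e1 B := by
    rw [Finset.insert_union, Finset.union_eq_right.2 hSB]
  rw [hABeq] at hCAB
  have he1C : e1 ∈ C := hAC (Finset.mem_insert_self _ _)
  have hBC : B ∩ C = C.erase e1 := by
    ext c
    constructor
    · intro hc
      rw [Finset.mem_inter] at hc
      exact Finset.mem_erase.2 ⟨fun h => he1B (h ▸ hc.1), hc.2⟩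
    · intro hc
      rw [Finset.mem_erase] at hc
      refine Finset.mem_inter.2 ⟨?_, hc.2⟩
      rcases Finset.mem_insert.1 (hCAB hc.2) with h | h
      · exact (hc.1 h).elim
      · exact h
  have hBCcard : (B \ C).card = 1 := by
    have h1 := Finset.card_sdiff_add_card_inter B C
    rw [hBC, Finset.card_erase_of_mem he1C, hCcard] at h1
    have hBpos : 0 < B.card :=
      lt_of_lt_of_le (Finset.card_pos.2 ⟨e1, Finset.mem_insert_self _ _⟩) hcard
    omega
  obtain ⟨e', he'⟩ := Finset.card_eq_one.1 hBCcard
  have he'BC : e' ∈ B \ C := he' ▸ Finset.mem_singleton_self e'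
  rw [Finset.mem_sdiff] at he'BC
  refine ⟨e', he'BC.1, fun h => he'BC.2 (hAC (Finset.mem_insert_of_mem h)), ?_⟩
  refine hF.subset ?_ hC
  intro c hc
  rcases Finset.mem_insert.1 hc with rfl | h
  · exact he1C
  · rw [Finset.mem_erase] at h
    by_contra hcC
    have : c ∈ B \ C := Finset.mem_sdiff.2 ⟨h.2, hcC⟩
    rw [he'] at this
    exact h.1 (Finset.mem_singleton.1 this)

end AuxLemmas

/-- Greedy gives a 1/2-approximation for monotone k-submodular maximization
subject to a matroid constraint. -/
theorem greedy_half_approximation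
    {E : Type*} [Fintype E] [DecidableEq E]
    (F : Finset E → Prop) (hF : IsMatroid F) (M : ℕ)
    (hM : ∀ B : Finset E, IsBasis F B → B.card = M)
    (k : ℕ) (hk : 1 ≤ k)
    (f : (E → Fin (k + 1)) → ℝ)
    (hsub : KSubmodular f) (hmono : KMonotone f)
    (hzero : f (fun _ => 0) = 0)
    (s : ℕ → E → Fin (k + 1)) (e : ℕ → E) (i : ℕ → Fin (k + 1))
    (hs0 : s 0 = fun _ => 0)
    (hstep : ∀ j < M,
      e (j + 1) ∉ supp (s j) ∧
      F (insert (e (j + 1)) (supp (s j))) ∧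
      i (j + 1) ≠ 0 ∧
      s (j + 1) = Function.update (s j) (e (j + 1)) (i (j + 1)) ∧
      ∀ e' : E, ∀ i' : Fin (k + 1),
        e' ∉ supp (s j) → F (insert e' (supp (s j))) → i' ≠ 0 →
        marg f (e (j + 1)) (i (j + 1)) (s j) ≥ marg f e' i' (s j)) :
    ∀ x : E → Fin (k + 1), F (supp x) → 2 * f (s M) ≥ f x := by
  classical
  intro x hx
  have h1ne0 : (1 : Fin (k + 1)) ≠ 0 := by
    have hv : ((1 : Fin (k + 1)) : ℕ) = 1 := by
      rw [Fin.val_one']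
      exact Nat.mod_eq_of_lt (by omega)
    intro h
    rw [h] at hv
    simp at hv
  -- cardinality of supports along the greedy sequence
  have hcard : ∀ j, j ≤ M → (supp (s j)).card = j := by
    intro j
    induction j with
    | zero =>
      intro _
      rw [hs0]
      simp [supp]
    | succ j ih =>
      intro hj
      obtain ⟨h1, h2, h3, h4, h5⟩ := hstep j (by omega)
      rw [h4, supp_update_ne h3, Finset.card_insert_of_notMem h1, ih (by omega)]
  -- extend x to a vector supported on a basis
  obtain ⟨B0, hB0sub, hB0⟩ := exists_basis_superset hF hx
  have hB0card : B0.card = M := hM B0 hB0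
  set xstar : E → Fin (k + 1) :=
    fun c => if x c ≠ 0 then x c else if c ∈ B0 then 1 else 0 with hxstar
  have hxle : kLe x xstar := by
    intro c hc
    simp [hxstar, hc]
  have hsuppxstar : supp xstar = B0 := by
    ext c
    rw [mem_supp']
    by_cases hc : x c = 0
    · simp only [hxstar, hc, ne_eq, not_true_eq_false, if_false, not_not]
      by_cases hcB : c ∈ B0
      · simp [hcB, h1ne0]
      · simp [hcB]
    · have hxc : xstar c = x c := by simp [hxstar, hc]
      rw [hxc]
      exact ⟨fun _ => hB0sub (mem_supp'.2 hc), fun _ => hc⟩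
  -- the main invariant
  have key : ∀ j, j ≤ M → ∃ o : E → Fin (k + 1),
      kLe (s j) o ∧ F (supp o) ∧ (supp o).card = M ∧ f xstar ≤ f o + f (s j) := by
    intro j
    induction j with
    | zero =>
      intro _
      refine ⟨xstar, ?_, ?_, ?_, ?_⟩
      · intro c hc
        rw [hs0] at hc
        exact (hc rfl).elim
      · rw [hsuppxstar]; exact hB0.1
      · rw [hsuppxstar]; exact hB0card
      · rw [hs0, hzero]; linarith
    | succ j ih =>
      intro hj
      obtain ⟨o, hole, hoF, hocard, hoineq⟩ := ih (by omega)
      obtain ⟨he1, hFins, hi1, hsj1, hgreedy⟩ := hstep j (by omega)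
      set t := s j with ht
      set e1 := e (j + 1) with he1d
      set i1 := i (j + 1) with hi1d
      have hSsubB : supp t ⊆ supp o := by
        intro c hc
        rw [mem_supp'] at hc ⊢
        rw [hole c hc]
        exact hc
      have hte1 : t e1 = 0 := by
        by_contra h
        exact he1 (mem_supp'.2 h)
      have hmarg : f (s (j + 1)) - f t = marg f e1 i1 t := by
        rw [hsj1]; rfl
      by_cases heB : e1 ∈ supp o
      · -- case e1 in supp o: replace the value of o at e1 by i1
        set i2 := o e1 with hi2
        have hi2ne : i2 ≠ 0 := mem_supp'.1 heB
        set om := Function.update o e1 (0 : Fin (k + 1)) with hom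
        have homi2 : Function.update om e1 i2 = o := by
          rw [hom, Function.update_idem, hi2, Function.update_eq_self]
        set o' := Function.update o e1 i1 with ho'
        have ho'om : o' = Function.update om e1 i1 := by
          rw [hom, Function.update_idem]
        refine ⟨o', ?_, ?_, ?_, ?_⟩
        · -- kLe (s (j+1)) o'
          rw [hsj1]
          intro c hc
          by_cases hce : c = e1
          · subst hce
            rw [ho', Function.update_self, Function.update_self]
          · rw [Function.update_of_ne hce] at hc
            rw [ho', Function.update_of_ne hce, Function.update_of_ne hce]
            exact hole c hc
        · rw [ho', supp_update_ne hi1, Finset.insert_eq_self.2 heB]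
          exact hoF
        · rw [ho', supp_update_ne hi1, Finset.insert_eq_self.2 heB]
          exact hocard
        · -- value inequality
          have hklem : kLe t om := by
            intro c hc
            have hce : c ≠ e1 := fun h => (h ▸ hc) hte1
            rw [hom, Function.update_of_ne hce]
            exact hole c hc
          have hom0 : om e1 = 0 := by rw [hom, Function.update_self]
          have horth := orthant hsub hklem hom0 hi2ne
          rw [homi2] at horth
          have hgr := hgreedy e1 i2 he1 hFins hi2ne
          have hmon : f om ≤ f o' := by
            rw [ho'om]
            exact hmono _ _ (kLe_update hom0 i1)
          rw [← hmarg] at hgr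
          unfold marg at hgr
          linarith
      · -- case e1 not in supp o : matroid exchange
        have hScard : (insert e1 (supp t)).card ≤ (supp o).card := by
          rw [Finset.card_insert_of_notMem he1, hcard j (by omega), hocard]
          omega
        obtain ⟨e', he'B, he'S, hFnew⟩ :=
          exchange_basis hF hFins hoF hSsubB he1 heB hScard
        set i2 := o e' with hi2
        have hi2ne : i2 ≠ 0 := mem_supp'.1 he'B
        set om := Function.update o e' (0 : Fin (k + 1)) with hom
        have homi2 : Function.update om e' i2 = o := by
          rw [hom, Function.update_idem, hi2, Function.update_eq_self]
        set o' := Function.update om e1 i1 with ho'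
        have he1e' : e1 ≠ e' := fun h => heB (h ▸ he'B)
        have hsuppo' : supp o' = insert e1 ((supp o).erase e') := by
          rw [ho', supp_update_ne hi1, hom, supp_update_zero]
        refine ⟨o', ?_, ?_, ?_, ?_⟩
        · rw [hsj1]
          intro c hc
          by_cases hce : c = e1
          · subst hce
            rw [ho', Function.update_self, Function.update_self]
          · rw [Function.update_of_ne hce] at hc
            have hce' : c ≠ e' := fun h => he'S (h ▸ mem_supp'.2 hc)
            rw [ho', Function.update_of_ne hce, hom, Function.update_of_ne hce',
              Function.update_of_ne hce]
            exact hole c hc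
        · rw [hsuppo']
          exact hFnew
        · rw [hsuppo']
          rw [Finset.card_insert_of_notMem (fun h => heB (Finset.erase_subset _ _ h)),
            Finset.card_erase_of_mem he'B, hocard]
          have : 0 < M := by omega
          omega
        · have hklem : kLe t om := by
            intro c hc
            have hce : c ≠ e' := fun h => he'S (h ▸ mem_supp'.2 hc)
            rw [hom, Function.update_of_ne hce]
            exact hole c hc
          have hom0 : om e' = 0 := by rw [hom, Function.update_self]
          have horth := orthant hsub hklem hom0 hi2ne
          rw [homi2] at horth
          have he'St : e' ∉ supp t := he'S
          have hFS' : F (insert e' (supp t)) := by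
            refine hF.subset ?_ hoF
            intro c hc
            rcases Finset.mem_insert.1 hc with rfl | h
            · exact he'B
            · exact hSsubB h
          have hgr := hgreedy e' i2 he'St hFS' hi2ne
          have home1 : om e1 = 0 := by
            rw [hom, Function.update_of_ne he1e']
            by_contra h
            exact heB (mem_supp'.2 h)
          have hmon : f om ≤ f o' := by
            rw [ho']
            exact hmono _ _ (kLe_update home1 i1)
          rw [← hmarg] at hgr
          unfold marg at hgr
          linarith
  -- conclude
  obtain ⟨o, hole, hoF, hocard, hoineq⟩ := key M le_rfl
  have hsupps : supp (s M) ⊆ supp o := by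
    intro c hc
    rw [mem_supp'] at hc ⊢
    rw [hole c hc]
    exact hc
  have hsuppeq : supp (s M) = supp o :=
    Finset.eq_of_subset_of_card_le hsupps (by rw [hocard, hcard M le_rfl])
  have hoeq : o = s M := by
    funext c
    by_cases hc : s M c = 0
    · have : c ∉ supp o := by rw [← hsuppeq, mem_supp']; simpa using hc
      rw [mem_supp', not_not] at this
      rw [this, hc]
    · rw [hole c hc]
  rw [hoeq] at hoineq
  have hxxstar : f x ≤ f xstar := hmono _ _ hxle
  linarith
end

section
/- Let $E$ be a finite set and $k \ge 1$. A function $f : (k+1)^E \to \mathbb{R}$ is $k$-submodular if and only if $f$ is both orthant submodular and pairwise monotone. -/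
open Finset

/-- `f` is orthant submodular. -/
def OrthantSubmodular {E : Type*} [Fintype E] [DecidableEq E] {k : ℕ}
    (f : (E → Fin (k + 1)) → ℝ) : Prop :=
  ∀ x y : E → Fin (k + 1), kLe x y → ∀ e : E, e ∉ supp y →
    ∀ i : Fin (k + 1), i ≠ 0 → marg f e i x ≥ marg f e i y

/-- `f` is pairwise monotone. -/
def PairwiseMonotone {E : Type*} [Fintype E] [DecidableEq E] {k : ℕ}
    (f : (E → Fin (k + 1)) → ℝ) : Prop :=
  ∀ x : E → Fin (k + 1), ∀ e : E, e ∉ supp x →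
    ∀ i j : Fin (k + 1), i ≠ 0 → j ≠ 0 → i ≠ j →
      marg f e i x + marg f e j x ≥ 0

section ForwardAux

variable {E : Type*} [Fintype E] [DecidableEq E] {k : ℕ}

private lemma fwd_sup {x y : E → Fin (k + 1)} (hxy : kLe x y) {e : E} (hye : y e = 0)
    {i : Fin (k + 1)} (hi : i ≠ 0) :
    kSup (Function.update x e i) y = Function.update y e i := by
  funext a
  by_cases hae : a = e
  · subst hae
    simp [kSup, hi, hye]
  · rw [Function.update_of_ne hae]
    simp only [kSup, Function.update_of_ne hae]
    by_cases h0 : x a = 0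
    · simp [h0]
    · have := hxy a h0
      simp [h0, this]
private lemma fwd_inf {x y : E → Fin (k + 1)} (hxy : kLe x y) {e : E} (hye : y e = 0)
    {i : Fin (k + 1)} (hi : i ≠ 0) :
    kInf (Function.update x e i) y = x := by
  have hxe : x e = 0 := by
    by_contra h
    exact absurd (hxy e h ▸ hye) h
  funext a
  by_cases hae : a = e
  · subst hae
    simp only [kInf, Function.update_self, hye]
    simp [hi, hxe]
  · simp only [kInf, Function.update_of_ne hae]
    by_cases h0 : x a = 0
    · split_ifs with h
      · rfl
      · exact h0.symm
    · simp [hxy a h0, h0]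
private lemma pw_sup {x : E → Fin (k + 1)} {e : E} (hxe : x e = 0)
    {i j : Fin (k + 1)} (hi : i ≠ 0) (hj : j ≠ 0) (hij : i ≠ j) :
    kSup (Function.update x e i) (Function.update x e j) = x := by
  funext a
  by_cases hae : a = e
  · subst hae
    simp [kSup, hi, hj, hij, hxe]
  · simp [kSup, Function.update_of_ne hae]
private lemma pw_inf {x : E → Fin (k + 1)} {e : E} (hxe : x e = 0)
    {i j : Fin (k + 1)} (hi : i ≠ 0) (hj : j ≠ 0) (hij : i ≠ j) :
    kInf (Function.update x e i) (Function.update x e j) = x := by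
  funext a
  by_cases hae : a = e
  · subst hae
    simp [kInf, hij, hxe]
  · simp [kInf, Function.update_of_ne hae]

end ForwardAux

section ReverseAux

variable {E : Type*} [Fintype E] [DecidableEq E] {k : ℕ}

private lemma supp_not_mem_iff (x : E → Fin (k + 1)) (e : E) :
    e ∉ supp x ↔ x e = 0 := by simp [supp]

private lemma kSup_eq_of_le {x y : E → Fin (k + 1)} (h : ∀ e, x e ≠ 0 → x e = y e) :
    kSup x y = y := by
  funext a
  unfold kSup
  by_cases h0 : x a = 0
  · simp [h0]
  · have hxy := h a h0
    simp [h0, ← hxy]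

private lemma kInf_eq_of_le {x y : E → Fin (k + 1)} (h : ∀ e, x e ≠ 0 → x e = y e) :
    kInf x y = x := by
  funext a
  unfold kInf
  by_cases h0 : x a = y a
  · simp [h0]
  · have : x a = 0 := by
      by_contra hne
      exact h0 (h a hne)
    simp [h0, this]

private lemma card_aux {x y : E → Fin (k + 1)} (e : E) (he : x e ≠ 0 ∧ x e ≠ y e)
    {n : ℕ}
    (hc : (Finset.univ.filter (fun a => x a ≠ 0 ∧ x a ≠ y a)).card ≤ n + 1) :
    (Finset.univ.filter
      (fun a => Function.update x e 0 a ≠ 0 ∧ Function.update x e 0 a ≠ y a)).card ≤ n := by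
  have hmem : e ∈ Finset.univ.filter (fun a => x a ≠ 0 ∧ x a ≠ y a) := by
    simp [he.1, he.2]
  have hsub : (Finset.univ.filter
      (fun a => Function.update x e 0 a ≠ 0 ∧ Function.update x e 0 a ≠ y a)) ⊆
      (Finset.univ.filter (fun a => x a ≠ 0 ∧ x a ≠ y a)).erase e := by
    intro a ha
    simp only [Finset.mem_filter, Finset.mem_univ, true_and] at ha
    have hae : a ≠ e := by
      intro h
      subst h
      simp at ha
    rw [Function.update_of_ne hae] at ha
    simp [Finset.mem_erase, hae, ha.1, ha.2]
  calc _ ≤ ((Finset.univ.filter (fun a => x a ≠ 0 ∧ x a ≠ y a)).erase e).card :=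
        Finset.card_le_card hsub
    _ = (Finset.univ.filter (fun a => x a ≠ 0 ∧ x a ≠ y a)).card - 1 :=
        Finset.card_erase_of_mem hmem
    _ ≤ n := by omega

private lemma update_update_self (x : E → Fin (k + 1)) (e : E) :
    Function.update (Function.update x e 0) e (x e) = x := by
  rw [Function.update_idem, Function.update_eq_self]

private lemma reverse_aux (f : (E → Fin (k + 1)) → ℝ)
    (h1 : OrthantSubmodular f) (h2 : PairwiseMonotone f) :
    ∀ n : ℕ, ∀ x y : E → Fin (k + 1),
      (Finset.univ.filter (fun a => x a ≠ 0 ∧ x a ≠ y a)).card ≤ n →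
      f x + f y ≥ f (kSup x y) + f (kInf x y) := by
  intro n
  induction n with
  | zero =>
    intro x y hc
    have hle : ∀ a, x a ≠ 0 → x a = y a := by
      intro a ha
      by_contra hne
      have : a ∈ Finset.univ.filter (fun a => x a ≠ 0 ∧ x a ≠ y a) := by simp [ha, hne]
      have := Finset.card_pos.mpr ⟨a, this⟩
      omega
    rw [kSup_eq_of_le hle, kInf_eq_of_le hle]
    linarith
  | succ n ih =>
    intro x y hc
    by_cases hbase : ∀ a, x a ≠ 0 → x a = y a
    · rw [kSup_eq_of_le hbase, kInf_eq_of_le hbase]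
      linarith
    push_neg at hbase
    by_cases hD : ∃ e, x e ≠ 0 ∧ y e ≠ 0 ∧ x e ≠ y e
    · -- conflict step
      obtain ⟨e, hxe, hye, hxy⟩ := hD
      set x' := Function.update x e 0 with hx'
      set W : E → Fin (k + 1) := fun a => if a = e then 0 else if x a = 0 then y a else x a
        with hW
      have hWe : W e = 0 := by simp [hW]
      have hWsupp : e ∉ supp W := (supp_not_mem_iff W e).mpr hWe
      have hkle1 : kLe x' W := by
        intro a ha
        have hae : a ≠ e := by
          intro h; subst h; simp [hx'] at ha
        have hxa : x' a = x a := Function.update_of_ne hae 0 x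
        rw [hxa] at ha
        rw [hxa]
        simp [hW, hae, ha]
      have hsupe : kSup x y e = 0 := by
        simp [kSup, hxe, hye, hxy]
      have hkle2 : kLe (kSup x y) W := by
        intro a ha
        have hae : a ≠ e := by
          intro h; subst h; exact ha hsupe
        by_cases h0 : x a = 0
        · simp [kSup, hW, h0, hae]
        · by_cases hy0 : y a = 0
          · simp [kSup, hW, h0, hy0, hae]
          · by_cases hxya : x a = y a
            · simp [kSup, hW, h0, hy0, hxya, hae]
            · exfalso; apply ha; simp [kSup, h0, hy0, hxya]
      have hm1 : marg f e (x e) x' ≥ marg f e (x e) W := h1 x' W hkle1 e hWsupp (x e) hxe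
      have hm2 : marg f e (y e) (kSup x y) ≥ marg f e (y e) W :=
        h1 (kSup x y) W hkle2 e hWsupp (y e) hye
      have hpm : marg f e (x e) W + marg f e (y e) W ≥ 0 :=
        h2 W e hWsupp (x e) (y e) hxe hye hxy
      have heq1 : marg f e (x e) x' = f x - f x' := by
        unfold marg
        rw [hx', update_update_self]
      have hsup' : kSup x' y = Function.update (kSup x y) e (y e) := by
        funext a
        by_cases hae : a = e
        · subst hae
          simp [kSup, hx']
        · rw [Function.update_of_ne hae]
          simp [kSup, hx', Function.update_of_ne hae]
      have heq2 : marg f e (y e) (kSup x y) = f (kSup x' y) - f (kSup x y) := by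
        unfold marg
        rw [hsup']
      have hinf' : kInf x' y = kInf x y := by
        funext a
        by_cases hae : a = e
        · subst hae
          have h1' : kInf x' y a = 0 := by
            simp only [kInf, hx', Function.update_self]
            split_ifs with h
            · exact h.symm ▸ rfl
            · rfl
          have h2' : kInf x y a = 0 := by simp [kInf, hxy]
          rw [h1', h2']
        · simp [kInf, hx', Function.update_of_ne hae]
      have hcard := card_aux e ⟨hxe, hxy⟩ hc
      have hIH := ih x' y hcard
      rw [hinf'] at hIH
      linarith
    · -- no conflicts: pick e with x e ≠ 0, x e ≠ y e, hence y e = 0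
      push_neg at hD
      obtain ⟨e, hxe, hxy⟩ := hbase
      have hye : y e = 0 := by
        by_contra hy0
        exact hxy (hD e hxe hy0)
      set x' := Function.update x e 0 with hx'
      have hsup' : kSup x' y = Function.update (kSup x y) e 0 := by
        funext a
        by_cases hae : a = e
        · subst hae
          simp [kSup, hx', hye]
        · rw [Function.update_of_ne hae]
          simp [kSup, hx', Function.update_of_ne hae]
      have hinf' : kInf x' y = kInf x y := by
        funext a
        by_cases hae : a = e
        · subst hae
          have h2' : kInf x y a = 0 := by
            simp [kInf]
            intro h; exact absurd (h.trans hye) hxe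
          have h1' : kInf x' y a = 0 := by
            simp [kInf, hx', hye]
          rw [h1', h2']
        · simp [kInf, hx', Function.update_of_ne hae]
      have hsupe : kSup x y e = x e := by
        simp [kSup, hxe, hye]
      have hsupp' : e ∉ supp (kSup x' y) := by
        rw [supp_not_mem_iff, hsup', Function.update_self]
      have hkle : kLe x' (kSup x' y) := by
        intro a ha
        have hae : a ≠ e := by
          intro h; subst h; simp [hx'] at ha
        have hxa : x' a = x a := Function.update_of_ne hae 0 x
        rw [hxa] at ha
        rw [hxa, hsup', Function.update_of_ne hae]
        by_cases hy0 : y a = 0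
        · simp [kSup, ha, hy0]
        · have := hD a ha hy0
          simp [kSup, ha, hy0, this]
      have hm : marg f e (x e) x' ≥ marg f e (x e) (kSup x' y) :=
        h1 x' (kSup x' y) hkle e hsupp' (x e) hxe
      have heq1 : marg f e (x e) x' = f x - f x' := by
        unfold marg
        rw [hx', update_update_self]
      have heq2 : marg f e (x e) (kSup x' y) = f (kSup x y) - f (kSup x' y) := by
        unfold marg
        rw [hsup', Function.update_idem]
        congr 2
        rw [← hsupe, Function.update_eq_self]
      have hcard := card_aux e ⟨hxe, hxy⟩ hc
      have hIH := ih x' y hcard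
      rw [hinf'] at hIH
      linarith

end ReverseAux

/-- (Ward–Živný)`f` is k-submodular iff it is orthant submodular and pairwise monotone. -/
theorem ksubmodular_iff_orthant_and_pairwise
    {E : Type*} [Fintype E] [DecidableEq E]
    (k : ℕ) (hk : 1 ≤ k) (f : (E → Fin (k + 1)) → ℝ) :
    KSubmodular f ↔ OrthantSubmodular f ∧ PairwiseMonotone f := by
  constructor
  · intro hf
    constructor
    · intro x y hxy e he i hi
      have hye : y e = 0 := by simpa [supp] using he
      have key := hf (Function.update x e i) y
      rw [fwd_sup hxy hye hi, fwd_inf hxy hye hi] at key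
      unfold marg
      linarith
    · intro x e he i j hi hj hij
      have hxe : x e = 0 := by simpa [supp] using he
      have key := hf (Function.update x e i) (Function.update x e j)
      rw [pw_sup hxe hi hj hij, pw_inf hxe hi hj hij] at key
      unfold marg
      linarith
  · rintro ⟨h1, h2⟩ x y
    exact reverse_aux f h1 h2 _ x y le_rfl
end

section
/- Let $E$ be a finite set, $k \ge 1$, and let $f : (k+1)^E \to \mathbb{R}$ be a monotone $k$-submodular function. Let $\mathbf{s}, \mathbf{y} \in (k+1)^E$ with $\mathbf{s} \preceq \mathbf{y}$, let $e, o \in E$ be two (not necessarily distinct) elements with $e, o \notin \mathrm{supp}(\mathbf{y})$, and let $i, \ell \in \{1,\dots,k\}$. If the greedy condition $\Delta_{e,i} f(\mathbf{s}) \ge \Delta_{o,\ell} f(\mathbf{s})$ holds, then $\Delta_{e,i} f(\mathbf{s}) \ge \Delta_{o,\ell} f(\mathbf{y}) - \Delta_{e,i} f(\mathbf{y})$; equivalently, writing $\mathbf{s}'$ for $\mathbf{s}$ with $\mathbf{s}'(e) = i$, $\mathbf{y}_o$ for $\mathbf{y}$ with $\mathbf{y}_o(o) = \ell$, and $\mathbf{y}_e$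 for $\mathbf{y}$ with $\mathbf{y}_e(e) = i$, one has $f(\mathbf{s}') - f(\mathbf{s}) \ge f(\mathbf{y}_o) - f(\mathbf{y}_e)$. -/
open Finset

/-- The key stepwise inequality: if the greedy choice `(e, i)` beats `(o, ℓ)` at `s`,
then `Δ_{e,i} f(s) ≥ Δ_{o,ℓ} f(y) - Δ_{e,i} f(y)` for every `y ⪰ s`
with `e, o ∉ supp y`. -/
theorem greedy_stepwise_inequality
    {E : Type*} [Fintype E] [DecidableEq E]
    (k : ℕ) (hk : 1 ≤ k) (f : (E → Fin (k + 1)) → ℝ)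
    (hsub : KSubmodular f) (hmono : KMonotone f)
    (s y : E → Fin (k + 1)) (hsy : kLe s y)
    (e o : E) (he : e ∉ supp y) (ho : o ∉ supp y)
    (i l : Fin (k + 1)) (hi : i ≠ 0) (hl : l ≠ 0)
    (hgreedy : marg f e i s ≥ marg f o l s) :
    marg f e i s ≥ marg f o l y - marg f e i y := by
  simp only [supp, Finset.mem_filter, Finset.mem_univ, true_and, not_not,
    Decidable.not_not] at he ho
  have hso : s o = 0 := by
    by_contra h
    exact h ((hsy o h).symm.trans ho)
  have hsup : kSup (Function.update s o l) y = Function.update y o l := by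
    funext a
    by_cases hao : a = o
    · subst hao
      simp [kSup, Function.update_self, hl, ho]
    · simp only [kSup, Function.update_of_ne hao]
      by_cases hsa : s a = 0
      · simp [hsa]
      · have hya := hsy a hsa
        simp [hsa, hya]
  have hinf : kInf (Function.update s o l) y = s := by
    funext a
    by_cases hao : a = o
    · subst hao
      simp [kInf, Function.update_self, ho, hl, hso]
    · simp only [kInf, Function.update_of_ne hao]
      by_cases hsa : s a = 0
      · split_ifs with h
        · rfl
        · exact hsa.symm
      · have hya := hsy a hsa
        simp [hya]
  have key := hsub (Function.update s o l) y
  rw [hsup, hinf] at key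
  have h2 : 0 ≤ marg f e i y := by
    have hle : kLe y (Function.update y e i) := by
      intro a ha
      have hae : a ≠ e := fun h => ha (h ▸ he)
      rw [Function.update_of_ne hae]
    have := hmono _ _ hle
    simp only [marg]
    linarith
  simp only [marg] at hgreedy h2 ⊢
  linarith
end
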